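/- arXiv:2604.11505 — 2 statements merged into one kernel-verified Lean document; each statement's English description precedes it below -/
import Mathlib

section
/- Let n, s be positive integers with n ≥ 2s + 5, s ≥ 5, and t = 3. If G is a subgraph of K_3 ∨ (K_{2s−5} ∪ K_3 ∪ complement(K_{n−2s−1})), then e(G) ≤ 3n + 2s² − 11s + 12, and this quantity is strictly less than max{ C(n,2) − C(n−s+1,2) + 5, C(2s−1,2) + n + 1 } when additionally n ≥ 40. -/
open SimpleGraph

/-- `M` is a matching in `G`: a set of edges of `G`, pairwise vertex-disjoint. -/
def IsMatchingOn {V : Type*} (G : SimpleGraph V) (M : Set (Sym2 V)) : Prop :=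
  M ⊆ G.edgeSet ∧ M.Pairwise fun e f => ∀ v, v ∈ e → v ∉ f

/-- The matching number of `G`. -/
noncomputable def matchNum {V : Type*} (G : SimpleGraph V) : ℕ :=
  sSup {k | ∃ M : Finset (Sym2 V), IsMatchingOn G ↑M ∧ M.card = k}

/-- The graph `K_t ∨ (K_a ∪ complement (K_(n-t-a)))` on vertex set `Fin n`. -/
def joinGraph (t a n : ℕ) : SimpleGraph (Fin n) where
  Adj i j := i ≠ j ∧ ((i : ℕ) < t ∨ (j : ℕ) < t ∨ ((i : ℕ) < t + a ∧ (j : ℕ) < t + a))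
  symm := by constructor; intro i j h; exact ⟨h.1.symm, by tauto⟩
  loopless := by constructor; intro i h; exact h.1 rfl

/-- The graph `K_t ∨ (K_a ∪ K_b ∪ complement (K_(n-t-a-b)))` on `Fin n`. -/
def join2Graph (t a b n : ℕ) : SimpleGraph (Fin n) where
  Adj i j := i ≠ j ∧ ((i : ℕ) < t ∨ (j : ℕ) < t ∨
    ((i : ℕ) < t + a ∧ (j : ℕ) < t + a) ∨
    (t + a ≤ (i : ℕ) ∧ (i : ℕ) < t + a + b ∧ t + a ≤ (j : ℕ) ∧ (j : ℕ) < t + a + b))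
  symm := by constructor; intro i j h; exact ⟨h.1.symm, by tauto⟩
  loopless := by constructor; intro i h; exact h.1 rfl

/-! In `K_t ∨ (K_a ∪ K_b ∪ complement K_(n-t-a-b))` a vertex of the `K_t` has degree at most `n - 1`,
one of the `K_a` at most `t + a - 1`, one of the `K_b` at most `t + b - 1` and any other at most `t`.
Halving the degree sum gives `C(t,2) + t(n-t) + C(a,2) + C(b,2)` edges, which for `t = b = 3`,
`a = 2s - 5` is `3n + 2s² - 11s + 12`. This is below `C(2s-1,2) + n + 1` exactly when `n < 4s - 5`,
and for `n ≥ 4s - 5` it is below `C(n,2) - C(n-s+1,2) + 5`, the difference being at least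
`(3s² - 19s + 26) / 2 > 0`. -/

open Finset

lemma Nat.two_mul_choose_two (m : ℕ) : 2 * m.choose 2 = m * (m - 1) := by
  rw [Nat.choose_two_right, Nat.mul_div_cancel' (Nat.even_mul_pred_self m).two_dvd]

lemma Fin.card_le_card_of_forall_val_mem {n : ℕ} {s : Finset (Fin n)} {S : Finset ℕ}
    (h : ∀ j ∈ s, (j : ℕ) ∈ S) : s.card ≤ S.card :=
  card_le_card_of_injOn Fin.val h Fin.val_injective.injOn

section join2Graph

variable {t a b n : ℕ}

instance : DecidableRel (join2Graph t a b n).Adj := fun i j => by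
  unfold join2Graph; infer_instance

def join2DegreeBound (t a b n i : ℕ) : ℕ :=
  if i < t then n - 1 else if i < t + a then t + (a - 1) else if i < t + a + b then t + (b - 1)
  else t

theorem join2Graph_degree_le (v : Fin n) :
    (join2Graph t a b n).degree v ≤ join2DegreeBound t a b n v := by
  rw [← SimpleGraph.card_neighborFinset_eq_degree, join2DegreeBound]
  have adj {j} (hj : j ∈ (join2Graph t a b n).neighborFinset v) := (mem_neighborFinset _ _ _).1 hj
  split_ifs with h₁ h₂ h₃
  · simpa [Nat.lt_iff_le_pred (Fin.pos v)] using (join2Graph t a b n).degree_lt_card_verts v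
  · calc _ ≤ ((range (t + a)).erase v).card := Fin.card_le_card_of_forall_val_mem fun j hj => by
          obtain ⟨hne, hadj⟩ := adj hj
          simp only [mem_erase, mem_range]
          exact ⟨Fin.val_ne_of_ne hne.symm, by omega⟩
      _ = t + (a - 1) := by rw [card_erase_of_mem (by simpa), card_range]; omega
  · calc _ ≤ (range t ∪ (Ico (t + a) (t + a + b)).erase v).card :=
          Fin.card_le_card_of_forall_val_mem fun j hj => by
            obtain ⟨hne, hadj⟩ := adj hj
            simp only [mem_union, mem_erase, mem_range, mem_Ico]
            have := Fin.val_ne_of_ne hne.symm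
            omega
      _ ≤ t + (b - 1) := by
          grw [card_union_le, card_erase_of_mem (by simp only [mem_Ico]; omega), card_range, Nat.card_Ico]
          omega
  · calc _ ≤ (range t).card := Fin.card_le_card_of_forall_val_mem fun j hj => by
          obtain ⟨-, hadj⟩ := adj hj
          simp only [mem_range]
          omega
      _ = t := card_range t

theorem sum_range_join2DegreeBound (h : t + a + b ≤ n) :
    ∑ i ∈ range n, join2DegreeBound t a b n i =
      2 * (t.choose 2 + t * (n - t) + a.choose 2 + b.choose 2) := by
  obtain ⟨r, rfl⟩ := Nat.exists_eq_add_of_le h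
  simp only [add_assoc, join2DegreeBound, sum_range_add, mem_range, imp_self, implies_true,
    sum_ite_of_true, sum_const, card_range, smul_eq_mul, add_lt_iff_neg_left, not_lt_zero,
    ↓reduceIte, add_lt_add_iff_left, add_tsub_cancel_left]
  simp only [mul_add 2, Nat.two_mul_choose_two]
  rcases t with _ | t
  · ring
  · simp only [add_right_comm _ 1, Nat.add_sub_cancel]
    ring

theorem join2Graph_edgeSet_ncard_le (h : t + a + b ≤ n) :
    (join2Graph t a b n).edgeSet.ncard ≤ t.choose 2 + t * (n - t) + a.choose 2 + b.choose 2 := by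
  have hle : ∑ v, (join2Graph t a b n).degree v ≤ ∑ v : Fin n, join2DegreeBound t a b n v :=
    sum_le_sum fun v _ => join2Graph_degree_le v
  rw [Fin.sum_univ_eq_sum_range (join2DegreeBound t a b n), sum_range_join2DegreeBound h,
    sum_degrees_eq_twice_card_edges] at hle
  rw [← coe_edgeFinset, Set.ncard_coe_finset]
  omega

end join2Graph

theorem three_mul_add_two_mul_sq_sub_lt_max_choose {n s : ℕ} (hs : 5 ≤ s) (hn : 2 * s + 5 ≤ n) :
    3 * n + 2 * s ^ 2 - 11 * s + 12 <
      max (n.choose 2 - (n - s + 1).choose 2 + 5) ((2 * s - 1).choose 2 + n + 1) := by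
  rcases lt_or_ge n (4 * s - 5) with hsmall | hlarge
  · refine lt_max_of_lt_right ?_
    have := Nat.two_mul_choose_two (2 * s - 1)
    zify [show 11 * s ≤ 3 * n + 2 * s ^ 2 by nlinarith, show 5 ≤ 4 * s by omega,
      show 1 ≤ 2 * s by omega, show 1 ≤ 2 * s - 1 by omega] at *
    linarith
  · refine lt_max_of_lt_left ?_
    have h₁ := Nat.two_mul_choose_two n
    have h₂ : 2 * (n - s + 1).choose 2 = (n - s + 1) * (n - s) := Nat.two_mul_choose_two _
    have hmono : (n - s + 1).choose 2 ≤ n.choose 2 := Nat.choose_le_choose 2 (by omega)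
    zify [show 11 * s ≤ 3 * n + 2 * s ^ 2 by nlinarith, hmono, show s ≤ n by omega,
      show 1 ≤ n by omega, show 5 ≤ 4 * s by omega] at *
    nlinarith [mul_le_mul_of_nonneg_right hlarge (show (0 : ℤ) ≤ s - 4 by linarith),
      mul_nonneg (show (0 : ℤ) ≤ s - 5 by linarith) (show (0 : ℤ) ≤ 3 * s - 4 by linarith)]

/-- Any subgraph of `K_3 ∨ (K_(2s−5) ∪ K_3 ∪ complement K_(n−2s−1))` has at most
`3n + 2s² − 11s + 12` edges, a quantity which is less than
`max{C(n,2) − C(n−s+1,2) + 5, C(2s−1,2) + n + 1}` when additionally `n ≥ 40`. -/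
theorem stmt_13 (n s : ℕ) (hs : 5 ≤ s) (hn : 2 * s + 5 ≤ n)
    (G : SimpleGraph (Fin n)) (hG : G ≤ join2Graph 3 (2 * s - 5) 3 n) :
    G.edgeSet.ncard ≤ 3 * n + 2 * s ^ 2 - 11 * s + 12 ∧
    (40 ≤ n → 3 * n + 2 * s ^ 2 - 11 * s + 12 <
      max (Nat.choose n 2 - Nat.choose (n - s + 1) 2 + 5)
        (Nat.choose (2 * s - 1) 2 + n + 1)) := by
  refine ⟨?_, fun _ => three_mul_add_two_mul_sq_sub_lt_max_choose hs hn⟩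
  have hchoose := Nat.two_mul_choose_two (2 * s - 5)
  calc G.edgeSet.ncard ≤ (join2Graph 3 (2 * s - 5) 3 n).edgeSet.ncard :=
        Set.ncard_le_ncard (edgeSet_mono hG)
    _ ≤ 3 + 3 * (n - 3) + (2 * s - 5).choose 2 + 3 := join2Graph_edgeSet_ncard_le (by omega)
    _ = 3 * n + 2 * s ^ 2 - 11 * s + 12 := by
      zify [show 11 * s ≤ 3 * n + 2 * s ^ 2 by nlinarith, show 3 ≤ n by omega,
        show 5 ≤ 2 * s by omega, show 1 ≤ 2 * s - 5 by omega] at hchoose ⊢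
      linarith
end

section
/- Let n, s be integers with n ≥ 2s + 5, and let F₂ = K_1 ∨ (K_{2s−1} ∪ complement(K_{n−2s})) be a spanning subgraph of K_n. Color each edge of F₂ with its own distinct color and all remaining edges of K_n with one additional color 0. Then this edge-coloring of K_n uses exactly C(2s−1,2) + n colors and contains no rainbow matching of size s+2 and no monochromatic copy of K_{n−2s−1} ∨ complement(K_{2s+1}). -/
/-!
Vertex `0` is the apex of `F₂` and `1, …, a` (with `a = 2s - 1`) is its clique. A rainbow matching
contains at most one edge of color `0`; of its `F₂`-edges at most one uses the apex, and the others
are disjoint pairs inside the `a`-clique, so there are at most `(a + 2) / 2` of them, giving at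
most `s + 1` edges in all. A monochromatic `K_{n-2s-1} ∨ complement(K_{2s+1})` spans all `n`
vertices and has two edges sharing an endpoint: they cannot share a nonzero color, since every
nonzero color is used only once, and color `0` is excluded because the apex is joined in `F₂` to
every other vertex.
-/

open SimpleGraph

open Finset

lemma IsMatchingOn.mono {V : Type*} {G : SimpleGraph V} {M N : Set (Sym2 V)}
    (hM : IsMatchingOn G M) (hNM : N ⊆ M) : IsMatchingOn G N :=
  ⟨hNM.trans hM.1, hM.2.mono hNM⟩

lemma IsMatchingOn.two_mul_card_le {V : Type*} [DecidableEq V] {G : SimpleGraph V}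
    {M : Finset (Sym2 V)} (hM : IsMatchingOn G M) {W : Finset V}
    (hW : ∀ e ∈ M, ∀ v ∈ e, v ∈ W) : 2 * #M ≤ #W := by
  have hdisj : (M : Set (Sym2 V)).PairwiseDisjoint Sym2.toFinset := by
    intro e he f hf hef
    exact Finset.disjoint_left.mpr fun v hve hvf =>
      hM.2 he hf hef v (Sym2.mem_toFinset.mp hve) (Sym2.mem_toFinset.mp hvf)
  calc 2 * #M = ∑ e ∈ M, #e.toFinset := by
        rw [Finset.sum_const_nat fun e he =>
          Sym2.card_toFinset_of_not_isDiag e (G.not_isDiag_of_mem_edgeSet (hM.1 he)), mul_comm]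
    _ = #(M.biUnion Sym2.toFinset) := (card_biUnion hdisj).symm
    _ ≤ #W := card_le_card fun v hv => by
        obtain ⟨e, he, hve⟩ := mem_biUnion.mp hv
        exact hW e he v (Sym2.mem_toFinset.mp hve)

lemma Sym2.mk_mem_image_mk_left_iff {α : Type*} [DecidableEq α] {s : Finset α} {x i j : α} :
    s(i, j) ∈ s.image (s(x, ·)) ↔ i = x ∧ j ∈ s ∨ j = x ∧ i ∈ s := by
  simp only [mem_image, Sym2.eq_iff]
  grind

variable {n a : ℕ}

lemma joinGraph_one_adj {i j : Fin n} :
    (joinGraph 1 a n).Adj i j ↔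
      i ≠ j ∧ ((i : ℕ) = 0 ∨ (j : ℕ) = 0 ∨ ((i : ℕ) ≤ a ∧ (j : ℕ) ≤ a)) := by
  simp only [joinGraph]
  omega

lemma joinGraph_one_adj_zero [NeZero n] {v : Fin n} (hv : v ≠ 0) : (joinGraph 1 a n).Adj 0 v :=
  joinGraph_one_adj.mpr ⟨hv.symm, Or.inl rfl⟩

lemma ncard_edgeSet_joinGraph_one [NeZero n] (ha : a < n) :
    (joinGraph 1 a n).edgeSet.ncard = a.choose 2 + (n - 1) := by
  set W := Ioc (0 : Fin n) ⟨a, ha⟩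
  have hsplit : (joinGraph 1 a n).edgeSet =
      ↑({e ∈ W.sym2 | ¬e.IsDiag} ∪ (univ.erase 0).image (s(0, ·))) := by
    ext e
    induction e with
    | _ i j =>
      simp only [mem_edgeSet, joinGraph_one_adj, coe_union, coe_filter, Set.mem_union,
        Set.mem_ofPred_eq, mk_mem_sym2_iff, Sym2.mk_isDiag_iff, mem_coe,
        Sym2.mk_mem_image_mk_left_iff, mem_erase, mem_univ, and_true, W, mem_Ioc,
        Fin.lt_def, Fin.le_def, ne_eq, Fin.ext_iff, Fin.val_zero]
      omega
  have hdisj : Disjoint {e ∈ W.sym2 | ¬e.IsDiag} ((univ.erase 0).image (s(0, ·))) := by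
    simp only [Finset.disjoint_left, mem_filter, mem_sym2_iff, mem_image]
    rintro e ⟨he, -⟩ ⟨x, -, rfl⟩
    exact (mem_Ioc.mp (he 0 (Sym2.mem_mk_left 0 x))).1.false
  rw [hsplit, Set.ncard_coe_finset, card_union_of_disjoint hdisj, sym2_eq_image,
    Sym2.filter_image_mk_not_isDiag, Sym2.card_image_offDiag,
    card_image_of_injective _ fun _ _ => Sym2.congr_right.mp, Fin.card_Ioc,
    card_erase_of_mem (mem_univ _), card_univ, Fintype.card_fin]
  rfl

lemma IsMatchingOn.two_mul_card_le_joinGraph_one [NeZero n] (ha : a < n)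
    {M : Finset (Sym2 (Fin n))} (hM : IsMatchingOn (joinGraph 1 a n) M) : 2 * #M ≤ a + 2 := by
  have hhub : #{e ∈ M | 0 ∈ e} ≤ 1 := card_le_one.mpr fun e he f hf => by
    by_contra hef
    exact hM.2 (mem_filter.mp he).1 (mem_filter.mp hf).1 hef 0 (mem_filter.mp he).2
      (mem_filter.mp hf).2
  have hrest : 2 * #{e ∈ M | 0 ∉ e} ≤ #(Ioc (0 : Fin n) ⟨a, ha⟩) := by
    refine (hM.mono (coe_subset.mpr (filter_subset _ _))).two_mul_card_le fun e he => ?_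
    induction e using Sym2.ind with
    | h i j =>
      have hadj : (joinGraph 1 a n).Adj i j := hM.1 (mem_filter.mp he).1
      rw [joinGraph_one_adj] at hadj
      have h0 := (mem_filter.mp he).2
      simp only [Sym2.mem_iff, not_or, Fin.ext_iff, Fin.val_zero] at h0
      intro v hv
      rw [Sym2.mem_iff] at hv
      simp only [mem_Ioc, Fin.lt_def, Fin.le_def, Fin.val_zero]
      rcases hv with rfl | rfl <;> omega
  rw [Fin.card_Ioc, Fin.val_zero, Fin.val_mk] at hrest
  have := card_filter_add_card_filter_not (s := M) (0 ∈ ·)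
  omega

section Coloring

variable {c : Sym2 (Fin n) → ℕ}

lemma two_mul_card_le_of_rainbow_matching [NeZero n] (ha : a < n)
    (h0 : ∀ e : Sym2 (Fin n), ¬ e.IsDiag → e ∉ (joinGraph 1 a n).edgeSet → c e = 0)
    {M : Finset (Sym2 (Fin n))} (hM : IsMatchingOn (⊤ : SimpleGraph (Fin n)) ↑M)
    (hrainbow : Set.InjOn c M) : 2 * #M ≤ a + 4 := by
  classical
  have hnd : ∀ e ∈ M, ¬ e.IsDiag := fun e he => not_isDiag_of_mem_edgeSet _ (hM.1 he)
  have hzero : #{e ∈ M | e ∉ (joinGraph 1 a n).edgeSet} ≤ 1 := card_le_one.mpr fun e he f hf => by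
    simp only [mem_filter] at he hf
    exact hrainbow he.1 hf.1 ((h0 e (hnd e he.1) he.2).trans (h0 f (hnd f hf.1) hf.2).symm)
  have hG : IsMatchingOn (joinGraph 1 a n) ↑{e ∈ M | e ∈ (joinGraph 1 a n).edgeSet} :=
    ⟨fun e he => (mem_filter.mp he).2, hM.2.mono (coe_subset.mpr (filter_subset _ _))⟩
  have := hG.two_mul_card_le_joinGraph_one ha
  have := card_filter_add_card_filter_not (s := M) (· ∈ (joinGraph 1 a n).edgeSet)
  omega

lemma eq_of_color_eq_of_ne_zero (hinj : Set.InjOn c (joinGraph 1 a n).edgeSet)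
    (h0 : ∀ e : Sym2 (Fin n), ¬ e.IsDiag → e ∉ (joinGraph 1 a n).edgeSet → c e = 0)
    {e f : Sym2 (Fin n)} (he : ¬ e.IsDiag) (hf : ¬ f.IsDiag) (hef : c e = c f) (hc : c e ≠ 0) :
    e = f :=
  hinj (not_not.mp fun h => hc (h0 e he h)) (not_not.mp fun h => hc (hef ▸ h0 f hf h)) hef

lemma not_monochromatic_join [NeZero n] (hinj : Set.InjOn c (joinGraph 1 a n).edgeSet)
    (hne : ∀ e ∈ (joinGraph 1 a n).edgeSet, c e ≠ 0)
    (h0 : ∀ e : Sym2 (Fin n), ¬ e.IsDiag → e ∉ (joinGraph 1 a n).edgeSet → c e = 0)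
    {k : ℕ} {S T : Finset (Fin n)} (hST : Disjoint S T) (hcover : n ≤ #S + #T) (hS : 2 < #S)
    (hSS : ∀ u ∈ S, ∀ v ∈ S, u ≠ v → c s(u, v) = k)
    (hSTk : ∀ u ∈ S, ∀ v ∈ T, c s(u, v) = k) : False := by
  obtain ⟨u, hu, v, hv, w, hw, huv, huw, hvw⟩ := two_lt_card.mp hS
  have hk : k ≠ 0 := by
    rintro rfl
    have hcover' : S ∪ T = univ :=
      eq_univ_of_card _ (le_antisymm (card_le_univ _) (by simpa [card_union_of_disjoint hST]))
    rcases mem_union.mp (hcover' ▸ mem_univ (0 : Fin n)) with h | h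
    · obtain ⟨x, hx, hx0⟩ : ∃ x ∈ S, x ≠ 0 := by
        by_cases hu0 : u = 0
        · exact ⟨v, hv, hu0 ▸ huv.symm⟩
        · exact ⟨u, hu, hu0⟩
      exact hne _ (joinGraph_one_adj_zero hx0) (hSS 0 h x hx hx0.symm)
    · have hu0 : u ≠ 0 := fun hu0 => disjoint_left.mp hST hu (hu0 ▸ h)
      exact hne _ (joinGraph_one_adj_zero hu0).symm (hSTk u hu 0 h)
  have hvw' := eq_of_color_eq_of_ne_zero hinj h0 (Sym2.mk_isDiag_iff.not.mpr huv)
    (Sym2.mk_isDiag_iff.not.mpr huw) ((hSS u hu v hv huv).trans (hSS u hu w hw huw).symm)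
    ((hSS u hu v hv huv).trans_ne hk)
  exact hvw (Sym2.congr_right.mp hvw')

lemma ncard_image_colors (ha : a + 3 ≤ n) (hinj : Set.InjOn c (joinGraph 1 a n).edgeSet)
    (hne : ∀ e ∈ (joinGraph 1 a n).edgeSet, c e ≠ 0)
    (h0 : ∀ e : Sym2 (Fin n), ¬ e.IsDiag → e ∉ (joinGraph 1 a n).edgeSet → c e = 0) :
    (c '' {e | ¬ e.IsDiag}).ncard = a.choose 2 + n := by
  have : NeZero n := ⟨by omega⟩
  have himage : c '' {e | ¬ e.IsDiag} = insert 0 (c '' (joinGraph 1 a n).edgeSet) := by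
    ext x
    constructor
    · rintro ⟨e, he, rfl⟩
      by_cases hG : e ∈ (joinGraph 1 a n).edgeSet
      · exact Or.inr ⟨e, hG, rfl⟩
      · exact Or.inl (h0 e he hG)
    · rintro (rfl | ⟨e, he, rfl⟩)
      · have hnd : ¬ (s(⟨a + 1, by omega⟩, ⟨a + 2, by omega⟩) : Sym2 (Fin n)).IsDiag := by simp
        refine ⟨_, hnd, h0 _ hnd ?_⟩
        simp [joinGraph_one_adj]
      · exact ⟨e, not_isDiag_of_mem_edgeSet _ he, rfl⟩
  have hzero : (0 : ℕ) ∉ c '' (joinGraph 1 a n).edgeSet := fun ⟨e, he, h⟩ => hne e he h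
  rw [himage, Set.ncard_insert_of_notMem hzero, hinj.ncard_image,
    ncard_edgeSet_joinGraph_one (by omega)]
  omega

end Coloring

/-- Tightness construction: coloring the edges of `F₂ = K_1 ∨ (K_(2s−1) ∪ complement
K_(n−2s))` with distinct nonzero colors and all other edges of `K_n` with color `0`
yields exactly `C(2s−1,2) + n` colors, no rainbow matching of size `s+2`, and no
monochromatic `K_(n−2s−1) ∨ complement (K_(2s+1))`. -/
theorem stmt_19 (n s : ℕ) (hs : 1 ≤ s) (hn : 2 * s + 5 ≤ n)
    (c : Sym2 (Fin n) → ℕ)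
    (hinj : Set.InjOn c (joinGraph 1 (2 * s - 1) n).edgeSet)
    (hne : ∀ e ∈ (joinGraph 1 (2 * s - 1) n).edgeSet, c e ≠ 0)
    (h0 : ∀ e : Sym2 (Fin n), ¬ e.IsDiag → e ∉ (joinGraph 1 (2 * s - 1) n).edgeSet → c e = 0) :
    (c '' {e : Sym2 (Fin n) | ¬ e.IsDiag}).ncard = Nat.choose (2 * s - 1) 2 + n ∧
    (¬ ∃ M : Finset (Sym2 (Fin n)),
      IsMatchingOn (⊤ : SimpleGraph (Fin n)) ↑M ∧ M.card = s + 2 ∧ Set.InjOn c ↑M) ∧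
    ¬ ∃ (k : ℕ) (S T : Finset (Fin n)), Disjoint S T ∧
      S.card = n - 2 * s - 1 ∧ T.card = 2 * s + 1 ∧
      (∀ u ∈ S, ∀ v ∈ S, u ≠ v → c s(u, v) = k) ∧
      (∀ u ∈ S, ∀ v ∈ T, c s(u, v) = k) := by
  have : NeZero n := ⟨by omega⟩
  refine ⟨ncard_image_colors (by omega) hinj hne h0, ?_, ?_⟩
  · rintro ⟨M, hM, hcard, hrainbow⟩
    have := two_mul_card_le_of_rainbow_matching (by omega) h0 hM hrainbow
    omega
  · rintro ⟨k, S, T, hST, hS, hT, hSS, hSTk⟩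
    exact not_monochromatic_join hinj hne h0 hST (by omega) (by omega) hSS hSTk
end
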